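/- (Row sign-coherence in G-systems) Let G_T be a G-system at t₀. For any G_t ∈ G_T, let R be the transition matrix from the initial basis G_{t₀} to G_t, i.e., (g_{1;t},…,g_{n;t}) = (g_{1;t₀},…,g_{n;t₀})·R. Then every row of R is either a nonnegative vector or a nonpositive vector. -/

import Mathlib

/-- A `G`-system at `t₀` (Definition 5.1.1): a collection of ℤ-bases of ℤⁿ, indexed by `T`,
satisfying the Mutation Condition, the Co-Bongartz Completion Condition and the
Uniqueness Condition. -/
structure GSystem (n : ℕ) (T : Type) (t₀ : T) where
  g : T → Fin n → (Fin n → ℤ)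
  indep : ∀ t, LinearIndependent ℤ (g t)
  span : ∀ t, Submodule.span ℤ (Set.range (g t)) = ⊤
  mutation : ∀ (t : T) (k : Fin n), ∃ t₁ : T,
    Set.range (g t) ∩ Set.range (g t₁) = Set.range (g t) \ {g t k}
  coBongartz : ∀ (t : T) (J : Set (Fin n → ℤ)), J ⊆ Set.range (g t₀) →
    ∃ t' : T, J ⊆ Set.range (g t') ∧
      ∀ (k : Fin n) (r : Fin n → ℤ), g t k = ∑ i, r i • g t' i →
        ∀ i, g t' i ∉ J → 0 ≤ r i
  uniqueness : ∀ (u v : T) (I I' : Finset (Fin n)) (r r' : Fin n → ℤ),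
    (∀ i ∈ I, 0 < r i) → (∀ j ∈ I', 0 < r' j) →
    (∑ i ∈ I, r i • g u i) = (∑ j ∈ I', r' j • g v j) →
    ∃ σ : Fin n → Fin n, Set.BijOn σ ↑I' ↑I ∧
      ∀ j ∈ I', r' j = r (σ j) ∧ g v j = g u (σ j)

/-- `G_{t'}` is a co-Bongartz completion of `J` with respect to `G_t`
(conditions (a) and (b) of Proposition-Definition 5.1.4). -/
def GSystem.IsCoB {n : ℕ} {T : Type} {t₀ : T} (S : GSystem n T t₀)
    (J : Set (Fin n → ℤ)) (t t' : T) : Prop :=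
  J ⊆ Set.range (S.g t') ∧
  ∀ (k : Fin n) (r : Fin n → ℤ), S.g t k = ∑ i, r i • S.g t' i →
    ∀ i, S.g t' i ∉ J → 0 ≤ r i

/-- `G_{t'}` is the mutation of `G_t` at `g_{k;t}`, i.e.
`G_t ∩ G_{t'} = G_t \ {g_{k;t}}` (Proposition-Definition 5.1.3). -/
def GSystem.IsMutationAt {n : ℕ} {T : Type} {t₀ : T} (S : GSystem n T t₀)
    (t t' : T) (k : Fin n) : Prop :=
  Set.range (S.g t) ∩ Set.range (S.g t') = Set.range (S.g t) \ {S.g t k}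

/-!
For row `i`, take a co-Bongartz completion `G_{t'}` of `G_{t₀} \ {g_{i;t₀}}` with respect to
`G_t`. Since `G_{t'}` has only `n` vectors, at most one of them, say `g_{l₀;t'}`, lies outside
`G_{t₀} \ {g_{i;t₀}}`, so the `i`-th `G_{t₀}`-coordinate vanishes on the rest of `G_{t'}`.
Hence `R i j` is the coefficient of `g_{j;t}` along `g_{l₀;t'}`, which is nonnegative by the
co-Bongartz condition, times a constant independent of `j`.
-/

theorem Set.subsingleton_compl_preimage_of_ncard {ι α : Type*} [Finite ι] {v : ι → α}
    (hv : Function.Injective v) {s : Set α} (hs : s ⊆ Set.range v)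
    (hcard : Nat.card ι ≤ s.ncard + 1) : (v ⁻¹' s)ᶜ.Subsingleton := by
  rw [← Set.ncard_le_one_iff_subsingleton, Set.ncard_compl,
    Set.ncard_preimage_of_injective_subset_range hv hs]
  omega

theorem sum_mul_nonneg_or_nonpos_of_subsingleton {ι κ R : Type*} [Fintype ι] [CommRing R]
    [LinearOrder R] [IsStrictOrderedRing R] (c : κ → ι → R) (d : ι → R)
    (hd : {l | d l ≠ 0}.Subsingleton) (hc : ∀ j l, d l ≠ 0 → 0 ≤ c j l) :
    (∀ j, 0 ≤ ∑ l, d l * c j l) ∨ (∀ j, ∑ l, d l * c j l ≤ 0) := by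
  rcases hd.eq_empty_or_singleton with hempty | ⟨l₀, hl₀⟩
  · have hzero : ∀ l, d l = 0 := fun l => by
      by_contra h
      exact hempty.subset (Set.mem_ofPred.mpr h)
    simp [hzero]
  · have hsum : ∀ j, ∑ l, d l * c j l = d l₀ * c j l₀ := fun j =>
      Finset.sum_eq_single l₀ (fun l _ hl => by
        have : d l = 0 := by
          by_contra h
          exact hl (hl₀.subset (Set.mem_ofPred.mpr h))
        rw [this, zero_mul]) (by simp)
    have hdl₀ : d l₀ ≠ 0 := by simpa using hl₀.symm.subset (Set.mem_singleton l₀)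
    simp only [hsum]
    rcases le_total 0 (d l₀) with h | h
    · exact .inl fun j => mul_nonneg h (hc j l₀ hdl₀)
    · exact .inr fun j => mul_nonpos_of_nonpos_of_nonneg h (hc j l₀ hdl₀)

namespace GSystem

variable {n : ℕ} {T : Type} {t₀ : T} (S : GSystem n T t₀)

noncomputable def basis (t : T) : Module.Basis (Fin n) ℤ (Fin n → ℤ) :=
  Module.Basis.mk (S.indep t) (S.span t).ge

@[simp]
theorem basis_apply (t : T) (l : Fin n) : S.basis t l = S.g t l :=
  Module.Basis.mk_apply _ _ _

theorem sum_repr_smul (t : T) (x : Fin n → ℤ) : ∑ l, (S.basis t).repr x l • S.g t l = x := by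
  simpa using (S.basis t).sum_repr x

theorem repr_eq_of_eq_sum {t : T} {x : Fin n → ℤ} {r : Fin n → ℤ}
    (hx : x = ∑ i, r i • S.g t i) : (S.basis t).repr x = r := by
  ext i
  simpa [hx] using congrFun ((S.basis t).repr_sum_self r) i

theorem repr_apply_eq_zero_of_mem_diff {t : T} {i : Fin n} {x : Fin n → ℤ}
    (hx : x ∈ Set.range (S.g t) \ {S.g t i}) : (S.basis t).repr x i = 0 := by
  obtain ⟨⟨m, rfl⟩, hm⟩ := hx
  have hmi : m ≠ i := fun h => hm (h ▸ rfl)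
  rw [← basis_apply, Module.Basis.repr_self, Finsupp.single_eq_of_ne hmi.symm]

theorem subsingleton_notMem_of_diff_subset {i : Fin n} {t' : T}
    (h : Set.range (S.g t₀) \ {S.g t₀ i} ⊆ Set.range (S.g t')) :
    {l | S.g t' l ∉ Set.range (S.g t₀) \ {S.g t₀ i}}.Subsingleton := by
  have hcard : Nat.card (Fin n) ≤ (Set.range (S.g t₀) \ {S.g t₀ i}).ncard + 1 := by
    rw [Set.ncard_sdiff_singleton_of_mem (Set.mem_range_self i),
      Set.ncard_range_of_injective (S.indep t₀).injective, Nat.card_fin]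
    omega
  exact Set.subsingleton_compl_preimage_of_ncard (S.indep t').injective h hcard

end GSystem

/-- Theorem 5.1.8 (row sign-coherence): for any `G_t` in a `G`-system at `t₀`,
the transition matrix `R` from the initial basis `G_{t₀}` to `G_t`
(`g_{j;t} = ∑ᵢ R i j • g_{i;t₀}`) is row sign-coherent: each row is either
nonnegative or nonpositive. -/
theorem stmt4 {n : ℕ} {T : Type} {t₀ : T} (S : GSystem n T t₀) (t : T)
    (R : Matrix (Fin n) (Fin n) ℤ)
    (hR : ∀ j : Fin n, S.g t j = ∑ i, R i j • S.g t₀ i) :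
    ∀ i : Fin n, (∀ j, 0 ≤ R i j) ∨ (∀ j, R i j ≤ 0) := by
  intro i
  set J := Set.range (S.g t₀) \ {S.g t₀ i}
  obtain ⟨t', hJ, hcob⟩ := S.coBongartz t J Set.sdiff_subset
  have hRcd : ∀ j, R i j =
      ∑ l, (S.basis t₀).repr (S.g t' l) i * (S.basis t').repr (S.g t j) l := fun j => by
    simpa [S.repr_eq_of_eq_sum (hR j)] using
      ((S.basis t₀).sum_repr_mul_repr (S.basis t') (S.g t j) i).symm
  have hvanish : ∀ l, S.g t' l ∈ J → (S.basis t₀).repr (S.g t' l) i = 0 := fun l =>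
    S.repr_apply_eq_zero_of_mem_diff
  simp only [hRcd]
  refine sum_mul_nonneg_or_nonpos_of_subsingleton _ _
    ((S.subsingleton_notMem_of_diff_subset hJ).anti fun l hl hlJ => hl (hvanish l hlJ)) ?_
  exact fun j l hl => hcob j _ (S.sum_repr_smul t' _).symm l fun hlJ => hl (hvanish l hlJ)
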